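/- Polyharmonicity (abstract corollary): under the hypotheses (a)–(e) of the abstract factorization theorem, for every dominant integral weight μ and every v ∈ V_μ with R_μ v = 0 one has Δ_μ^{ μ_1 + 1} v = 0. -/

import Mathlib

/-!
On a vector killed by `R`, the operator `Δ` only produces down-and-up compositions of the `T`'s:
by (b) every lowering `T ⋯ T v` is again killed by `R`, so the `R²` term of (a) drops out, and
by (c) `Δ` moves past the raising operators. Hence `Δ_μ^m v` lies in the span of the vectors
obtained by going down `m` steps from `μ` to some `λ` and back up. For `m = μ_1 + 1` we have
`∑ (μ_i - λ_i) = μ_1 + 1 > μ_1 = ∑ (μ_i - μ_{i+1})`, so `λ ∉ B(μ)` and the way back up vanishes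
by (d), unless a weight on the way is not dominant, in which case the way down already vanishes.
-/

/-- A weight `λ ∈ ℤ^n` is dominant integral if `λ_1 ≥ λ_2 ≥ … ≥ λ_n ≥ 0`. -/
def DomInt {n : ℕ} (lam : Fin n → ℤ) : Prop :=
  Antitone lam ∧ ∀ i, 0 ≤ lam i

/-- Manhattan distance `|μ,ν| = ∑ i |μ_i - ν_i|` between weights. -/
def mdist {n : ℕ} (μ ν : Fin n → ℤ) : ℤ :=
  ∑ i : Fin n, |μ i - ν i|

/-- A path from `ν` to `μ`: a finite sequence `(λ_p)_{p=0}^N` of dominant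
integral weights with `λ_0 = ν`, `λ_N = μ`, and `λ_p = λ_{p-1} + ε_{Ch(p)}`
for each `p ∈ {1,…,N}`, where `ε_i` is the `i`-th standard basis vector. -/
structure WPath (n : ℕ) (ν μ : Fin n → ℤ) where
  N : ℕ
  seq : ℕ → Fin n → ℤ
  ch : ℕ → Fin n
  first : seq 0 = ν
  last : seq N = μ
  dom : ∀ p, p ≤ N → DomInt (seq p)
  step : ∀ p, 1 ≤ p → p ≤ N → seq p = seq (p - 1) + Pi.single (ch p) 1

section PathOperators

variable {n : ℕ} {V : (Fin n → ℤ) → Type*}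
  [∀ lam, AddCommGroup (V lam)] [∀ lam, Module ℂ (V lam)]

/-- Transport along an equality of weights. -/
def lcast {a b : Fin n → ℤ} (h : a = b) : V a →ₗ[ℂ] V b where
  toFun v := h ▸ v
  map_add' := by subst h; intros; rfl
  map_smul' := by subst h; intros; rfl

/-- The composition `T_{λ_N λ_{N-1}} ∘ ⋯ ∘ T_{λ_1 λ_0}` along the initial
segment of length `N` of a sequence of weights. -/
def pathOpAux (T : ∀ μ lam : Fin n → ℤ, V lam →ₗ[ℂ] V μ)
    (seq : ℕ → Fin n → ℤ) : (N : ℕ) → (V (seq 0) →ₗ[ℂ] V (seq N))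
  | 0 => LinearMap.id
  | (N + 1) => (T (seq (N + 1)) (seq N)).comp (pathOpAux T seq N)

/-- The composition `T_{λ_0 λ_1} ∘ ⋯ ∘ T_{λ_{N-1} λ_N}` along the reversed
initial segment of length `N` of a sequence of weights. -/
def revPathOpAux (T : ∀ μ lam : Fin n → ℤ, V lam →ₗ[ℂ] V μ)
    (seq : ℕ → Fin n → ℤ) : (N : ℕ) → (V (seq N) →ₗ[ℂ] V (seq 0))
  | 0 => LinearMap.id
  | (N + 1) => (revPathOpAux T seq N).comp (T (seq N) (seq (N + 1)))

/-- The path operator `V_ν → V_μ` along a path from `ν` to `μ`. -/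
def pathOp (T : ∀ μ lam : Fin n → ℤ, V lam →ₗ[ℂ] V μ) {ν μ : Fin n → ℤ}
    (P : WPath n ν μ) : V ν →ₗ[ℂ] V μ :=
  (lcast (V := V) P.last).comp
    ((pathOpAux T P.seq P.N).comp (lcast (V := V) P.first.symm))

/-- The path operator `V_μ → V_ν` along the reverse of a path from `ν` to
`μ`. -/
def revPathOp (T : ∀ μ lam : Fin n → ℤ, V lam →ₗ[ℂ] V μ) {ν μ : Fin n → ℤ}
    (P : WPath n ν μ) : V μ →ₗ[ℂ] V ν :=
  (lcast (V := V) P.first).comp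
    ((revPathOpAux T P.seq P.N).comp (lcast (V := V) P.last.symm))

end PathOperators

/-- The value `μ_{i+1}` at position `i`, with the convention `μ_{n+1} := 0`. -/
def boxNext {n : ℕ} (μ : Fin n → ℤ) (i : Fin n) : ℤ :=
  if h : (i : ℕ) + 1 < n then μ ⟨(i : ℕ) + 1, h⟩ else 0

/-- The box `B(μ)`: the set of dominant integral weights `λ` with
`μ_i ≥ λ_i ≥ μ_{i+1}` for `1 ≤ i ≤ n-1` and `μ_n ≥ λ_n ≥ 0`. -/
def InBox {n : ℕ} (μ lam : Fin n → ℤ) : Prop :=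
  DomInt lam ∧ ∀ i : Fin n, boxNext μ i ≤ lam i ∧ lam i ≤ μ i

open Classical in
/-- The box `B(μ)` as a finite set of weights. -/
noncomputable def boxFinset {n : ℕ} (μ : Fin n → ℤ) : Finset (Fin n → ℤ) :=
  (Finset.Icc (boxNext μ) μ).filter (fun lam => InBox μ lam)

section Weights

variable {n : ℕ}

lemma mdist_comm (μ ν : Fin n → ℤ) : mdist μ ν = mdist ν μ := by
  simp only [mdist, abs_sub_comm]

lemma mdist_sub_single_right (lam : Fin n → ℤ) (p : Fin n) :
    mdist lam (lam - Pi.single p 1) = 1 := by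
  classical
  simp only [mdist, Pi.sub_apply, sub_sub_cancel, Pi.single_apply, apply_ite,
    abs_one, abs_zero, Finset.sum_ite_eq', Finset.mem_univ, if_true]

lemma mdist_sub_single_left (lam : Fin n → ℤ) (p : Fin n) :
    mdist (lam - Pi.single p 1) lam = 1 := by
  rw [mdist_comm, mdist_sub_single_right]

lemma sum_sub_boxNext (hn : 0 < n) (μ : Fin n → ℤ) :
    ∑ i : Fin n, (μ i - boxNext μ i) = μ ⟨0, hn⟩ := by
  set f : ℕ → ℤ := fun k => if h : k < n then μ ⟨k, h⟩ else 0
  have hf : ∀ i : Fin n, μ i - boxNext μ i = f i - f (i + 1) := fun i => by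
    simp [f, boxNext]
  rw [Finset.sum_congr rfl fun i _ => hf i, Fin.sum_univ_eq_sum_range (fun k => f k - f (k + 1)),
    Finset.sum_range_sub' f n]
  simp [f, hn]

def descend (μ : Fin n → ℤ) : List (Fin n) → Fin n → ℤ
  | [] => μ
  | i :: w => descend μ w - Pi.single i 1

lemma descend_le (μ : Fin n → ℤ) : ∀ (w : List (Fin n)) (i : Fin n), descend μ w i ≤ μ i
  | [], _ => le_rfl
  | j :: w, i =>
    have hj : 0 ≤ (Pi.single j 1 : Fin n → ℤ) := Pi.single_nonneg.2 zero_le_one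
    (sub_le_self _ (hj i)).trans (descend_le μ w i)

lemma sum_sub_descend (μ : Fin n → ℤ) :
    ∀ w : List (Fin n), ∑ i : Fin n, (μ i - descend μ w i) = w.length
  | [] => by simp [descend]
  | j :: w => by
    simp [descend, ← sub_add, Finset.sum_add_distrib, sum_sub_descend μ w]

lemma descend_ne_self {μ : Fin n → ℤ} {w : List (Fin n)} (hw : w ≠ []) : descend μ w ≠ μ := by
  intro h
  have hsum := sum_sub_descend μ w
  simp only [h, sub_self, Finset.sum_const_zero] at hsum
  exact hw (List.length_eq_zero_iff.1 (by omega))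

lemma not_inBox_descend (hn : 0 < n) {μ : Fin n → ℤ} {w : List (Fin n)}
    (hw : μ ⟨0, hn⟩ < w.length) : ¬ InBox μ (descend μ w) := by
  intro hbox
  have hsum := Finset.sum_le_sum fun i (_ : i ∈ Finset.univ) =>
    sub_le_sub_left (hbox.2 i).1 (μ i)
  rw [sum_sub_descend, sum_sub_boxNext hn] at hsum
  omega

end Weights

section Operators

variable {n : ℕ} {V : (Fin n → ℤ) → Type*}
  [∀ lam, AddCommGroup (V lam)] [∀ lam, Module ℂ (V lam)]
  (T : ∀ μ lam : Fin n → ℤ, V lam →ₗ[ℂ] V μ)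

def descendOp (μ : Fin n → ℤ) : (w : List (Fin n)) → V μ →ₗ[ℂ] V (descend μ w)
  | [] => LinearMap.id
  | i :: w => (T (descend μ (i :: w)) (descend μ w)).comp (descendOp μ w)

def ascendOp (μ : Fin n → ℤ) : (w : List (Fin n)) → V (descend μ w) →ₗ[ℂ] V μ
  | [] => LinearMap.id
  | i :: w => (ascendOp μ w).comp (T (descend μ w) (descend μ (i :: w)))

lemma R_descendOp_apply_eq_zero (R : ∀ lam : Fin n → ℤ, Module.End ℂ (V lam))
    (hanti : ∀ μ lam : Fin n → ℤ, mdist μ lam = 1 →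
      (T μ lam).comp (R lam) + (R μ).comp (T μ lam) = 0)
    {μ : Fin n → ℤ} {v : V μ} (hv : R μ v = 0) :
    ∀ w : List (Fin n), R (descend μ w) (descendOp T μ w v) = 0
  | [] => hv
  | j :: w => by
    change R _ (T _ _ (descendOp T μ w v)) = 0
    have h := LinearMap.congr_fun
      (hanti (descend μ (j :: w)) (descend μ w) (mdist_sub_single_left _ j)) (descendOp T μ w v)
    simpa [R_descendOp_apply_eq_zero R hanti hv w] using h

lemma comp_ascendOp (Δ : ∀ lam : Fin n → ℤ, Module.End ℂ (V lam))
    (hΔT : ∀ μ lam : Fin n → ℤ, mdist μ lam = 1 →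
      (Δ μ).comp (T μ lam) = (T μ lam).comp (Δ lam)) (μ : Fin n → ℤ) :
    ∀ w : List (Fin n), (Δ μ).comp (ascendOp T μ w) = (ascendOp T μ w).comp (Δ (descend μ w))
  | [] => rfl
  | j :: w => by
    simp only [ascendOp]
    rw [← LinearMap.comp_assoc, comp_ascendOp Δ hΔT μ w, LinearMap.comp_assoc,
      hΔT (descend μ w) (descend μ (j :: w)) (mdist_sub_single_right _ j), LinearMap.comp_assoc]

lemma descendOp_eq_zero
    (hT0 : ∀ μ lam : Fin n → ℤ, ¬(DomInt μ ∧ DomInt lam) → T μ lam = 0)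
    {μ : Fin n → ℤ} (hμ : DomInt μ) :
    ∀ (w : List (Fin n)) (p : ℕ), ¬ DomInt (descend μ (w.drop p)) → descendOp T μ w = 0
  | [], _, h => absurd hμ (by simpa [descend] using h)
  | j :: w, 0, h => by
    rw [descendOp, hT0 (descend μ (j :: w)) _ (fun hdom => h hdom.1), LinearMap.zero_comp]
  | j :: w, p + 1, h => by
    rw [descendOp, descendOp_eq_zero hT0 hμ w p h, LinearMap.comp_zero]

lemma Δ_apply_of_R_apply_eq_zero {R Δ : ∀ lam : Fin n → ℤ, Module.End ℂ (V lam)}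
    {lam : Fin n → ℤ} {a : ℂ} {b : Fin n → ℂ}
    (hfact : Δ lam = a • ((R lam).comp (R lam)) +
      ∑ p : Fin n, b p • (T lam (lam - Pi.single p 1)).comp (T (lam - Pi.single p 1) lam))
    {y : V lam} (hy : R lam y = 0) :
    Δ lam y = ∑ p : Fin n, b p • T lam (lam - Pi.single p 1) (T (lam - Pi.single p 1) lam y) := by
  simp [hfact, hy]

def wordSpan (μ : Fin n → ℤ) (v : V μ) (m : ℕ) : Submodule ℂ (V μ) :=
  Submodule.span ℂ {x | ∃ w : List (Fin n), w.length = m ∧ ascendOp T μ w (descendOp T μ w v) = x}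

section Laplace

variable (R Δ : ∀ lam : Fin n → ℤ, Module.End ℂ (V lam))
  (hT0 : ∀ μ lam : Fin n → ℤ, ¬(DomInt μ ∧ DomInt lam) → T μ lam = 0)
  {a : (Fin n → ℤ) → ℂ} {b : (Fin n → ℤ) → Fin n → ℂ}
  (hfact : ∀ lam : Fin n → ℤ, DomInt lam →
    Δ lam = a lam • ((R lam).comp (R lam)) +
      ∑ p : Fin n, b lam p •
        (T lam (lam - Pi.single p 1)).comp (T (lam - Pi.single p 1) lam))
  (hanti : ∀ μ lam : Fin n → ℤ, mdist μ lam = 1 →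
    (T μ lam).comp (R lam) + (R μ).comp (T μ lam) = 0)
  (hΔT : ∀ μ lam : Fin n → ℤ, mdist μ lam = 1 →
    (Δ μ).comp (T μ lam) = (T μ lam).comp (Δ lam))
  {μ : Fin n → ℤ} (hμ : DomInt μ) {v : V μ} (hv : R μ v = 0)
include hT0 hfact hanti hΔT hμ hv

lemma Δ_apply_mem_wordSpan (w : List (Fin n)) :
    Δ μ (ascendOp T μ w (descendOp T μ w v)) ∈ wordSpan T μ v (w.length + 1) := by
  rw [← LinearMap.comp_apply, comp_ascendOp T Δ hΔT, LinearMap.comp_apply]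
  by_cases hdom : DomInt (descend μ w)
  · rw [Δ_apply_of_R_apply_eq_zero T (hfact _ hdom)
      (R_descendOp_apply_eq_zero T R hanti hv w), map_sum]
    refine Submodule.sum_mem _ fun p _ => ?_
    rw [map_smul]
    exact Submodule.smul_mem _ _ (Submodule.subset_span ⟨p :: w, rfl, rfl⟩)
  · rw [descendOp_eq_zero T hT0 hμ w 0 hdom]
    simp

lemma pow_apply_mem_wordSpan : ∀ m : ℕ, (Δ μ ^ m) v ∈ wordSpan T μ v m
  | 0 => by
    rw [pow_zero]
    exact Submodule.subset_span ⟨[], rfl, rfl⟩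
  | m + 1 => by
    have hle : wordSpan T μ v m ≤ (wordSpan T μ v (m + 1)).comap (Δ μ) := by
      rw [wordSpan, Submodule.span_le]
      rintro _ ⟨w, rfl, rfl⟩
      exact Δ_apply_mem_wordSpan T R Δ hT0 hfact hanti hΔT hμ hv w
    rw [pow_succ', Module.End.mul_apply]
    exact hle (pow_apply_mem_wordSpan m)

end Laplace

def WPath.ofWord (hn : 0 < n) (μ : Fin n → ℤ) (w : List (Fin n))
    (hdom : ∀ p, DomInt (descend μ (w.drop p))) : WPath n (descend μ w) μ where
  N := w.length
  seq p := descend μ (w.drop p)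
  ch p := w.getD (p - 1) ⟨0, hn⟩
  first := rfl
  last := by rw [List.drop_length]; rfl
  dom p _ := hdom p
  step := by
    rintro (_ | q) hp hq
    · omega
    · have hq' : q < w.length := by omega
      simp only [Nat.add_sub_cancel, List.drop_eq_getElem_cons hq', List.getD_eq_getElem _ _ hq',
        descend, sub_add_cancel]

lemma pathOpAux_succ (seq : ℕ → Fin n → ℤ) :
    ∀ N : ℕ, pathOpAux T seq (N + 1) =
      (pathOpAux (V := V) T (fun p => seq (p + 1)) N).comp (T (seq 1) (seq 0))
  | 0 => rfl
  | N + 1 => by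
    rw [pathOpAux, pathOpAux_succ seq N, pathOpAux, LinearMap.comp_assoc]

lemma lcast_comp_pathOpAux_drop (μ : Fin n → ℤ) :
    ∀ (w : List (Fin n)) (h : descend μ (w.drop w.length) = μ),
      (lcast h).comp (pathOpAux T (fun p => descend μ (w.drop p)) w.length) = ascendOp T μ w
  | [], _ => rfl
  | j :: w, h =>
    (congrArg (lcast h).comp (pathOpAux_succ T _ w.length)).trans
      (congrArg (·.comp (T (descend μ w) (descend μ (j :: w))))
        (lcast_comp_pathOpAux_drop μ w h))

lemma pathOp_ofWord (hn : 0 < n) (μ : Fin n → ℤ) (w : List (Fin n))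
    (hdom : ∀ p, DomInt (descend μ (w.drop p))) :
    pathOp T (WPath.ofWord hn μ w hdom) = ascendOp T μ w :=
  lcast_comp_pathOpAux_drop T μ w _

lemma ascendOp_comp_descendOp_eq_zero (hn : 0 < n)
    (hT0 : ∀ μ lam : Fin n → ℤ, ¬(DomInt μ ∧ DomInt lam) → T μ lam = 0)
    (hvanish : ∀ lam μ : Fin n → ℤ, DomInt lam → DomInt μ →
      (∀ i, lam i ≤ μ i) → lam ≠ μ → ¬ InBox μ lam → ∀ P : WPath n lam μ, pathOp T P = 0)
    {μ : Fin n → ℤ} (hμ : DomInt μ) {w : List (Fin n)} (hw : μ ⟨0, hn⟩ < w.length) :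
    (ascendOp T μ w).comp (descendOp T μ w) = 0 := by
  by_cases hdom : ∀ p, DomInt (descend μ (w.drop p))
  · have hne : w ≠ [] := List.ne_nil_of_length_pos (by have := hμ.2 ⟨0, hn⟩; omega)
    rw [← pathOp_ofWord T hn μ w hdom, hvanish (descend μ w) μ (hdom 0) hμ (descend_le μ w)
      (descend_ne_self hne) (not_inBox_descend hn hw), LinearMap.zero_comp]
  · obtain ⟨p, hp⟩ := not_forall.1 hdom
    rw [descendOp_eq_zero T hT0 hμ w p hp, LinearMap.comp_zero]

lemma wordSpan_eq_bot (hn : 0 < n)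
    (hT0 : ∀ μ lam : Fin n → ℤ, ¬(DomInt μ ∧ DomInt lam) → T μ lam = 0)
    (hvanish : ∀ lam μ : Fin n → ℤ, DomInt lam → DomInt μ →
      (∀ i, lam i ≤ μ i) → lam ≠ μ → ¬ InBox μ lam → ∀ P : WPath n lam μ, pathOp T P = 0)
    {μ : Fin n → ℤ} (hμ : DomInt μ) (v : V μ) {m : ℕ} (hm : μ ⟨0, hn⟩ < m) :
    wordSpan T μ v m = ⊥ := by
  refine Submodule.span_eq_bot.2 ?_
  rintro _ ⟨w, rfl, rfl⟩
  exact LinearMap.congr_fun (ascendOp_comp_descendOp_eq_zero T hn hT0 hvanish hμ hm) v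

end Operators

theorem polyharmonic_of_RS_general {n : ℕ} (hn : 0 < n)
    {V : (Fin n → ℤ) → Type*} [∀ lam, AddCommGroup (V lam)]
    [∀ lam, Module ℂ (V lam)]
    (T : ∀ μ lam : Fin n → ℤ, V lam →ₗ[ℂ] V μ)
    (R : ∀ lam : Fin n → ℤ, Module.End ℂ (V lam))
    (Δ : ∀ lam : Fin n → ℤ, Module.End ℂ (V lam))
    (hT0 : ∀ μ lam : Fin n → ℤ, ¬(DomInt μ ∧ DomInt lam) → T μ lam = 0)
    -- (a) splitting of the Laplace operator
    (a : (Fin n → ℤ) → ℂ) (b : (Fin n → ℤ) → Fin n → ℂ)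
    (hfact : ∀ lam : Fin n → ℤ, DomInt lam →
      Δ lam = a lam • ((R lam).comp (R lam)) +
        ∑ p : Fin n, b lam p •
          (T lam (lam - Pi.single p 1)).comp (T (lam - Pi.single p 1) lam))
    -- (b) anticommutation of T and R
    (hanti : ∀ μ lam : Fin n → ℤ, mdist μ lam = 1 →
      (T μ lam).comp (R lam) + (R μ).comp (T μ lam) = 0)
    -- (c) the Laplace operators commute with T and R
    (hΔT : ∀ μ lam : Fin n → ℤ, mdist μ lam = 1 →
      (Δ μ).comp (T μ lam) = (T μ lam).comp (Δ lam))
    -- (d) path operators to and from weights outside the box vanish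
    (hvanish : ∀ lam μ : Fin n → ℤ, DomInt lam → DomInt μ →
      (∀ i, lam i ≤ μ i) → lam ≠ μ → ¬ InBox μ lam →
      ∀ P : WPath n lam μ, pathOp T P = 0 ∧ revPathOp T P = 0)
    (μ : Fin n → ℤ) (hμ : DomInt μ) (v : V μ) (hv : R μ v = 0) :
    (Δ μ ^ ((μ ⟨0, hn⟩).toNat + 1)) v = 0 := by
  have hmem := pow_apply_mem_wordSpan T R Δ hT0 hfact hanti hΔT hμ hv ((μ ⟨0, hn⟩).toNat + 1)
  have hbot : wordSpan T μ v ((μ ⟨0, hn⟩).toNat + 1) = ⊥ :=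
    wordSpan_eq_bot T hn hT0 (fun lam ν h₁ h₂ h₃ h₄ h₅ P => (hvanish lam ν h₁ h₂ h₃ h₄ h₅ P).1)
      hμ v (by omega)
  rwa [hbot, Submodule.mem_bot] at hmem

/-- Polyharmonicity (abstract corollary): under the hypotheses (a)–(e) of the
abstract factorization theorem, every `v ∈ V_μ` with `R_μ v = 0` satisfies
`Δ_μ^{μ_1 + 1} v = 0`. -/
theorem polyharmonic_of_RS {n : ℕ} (hn : 0 < n)
    {V : (Fin n → ℤ) → Type*} [∀ lam, AddCommGroup (V lam)]
    [∀ lam, Module ℂ (V lam)]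
    (T : ∀ μ lam : Fin n → ℤ, V lam →ₗ[ℂ] V μ)
    (R : ∀ lam : Fin n → ℤ, Module.End ℂ (V lam))
    (Δ : ∀ lam : Fin n → ℤ, Module.End ℂ (V lam))
    (hT0 : ∀ μ lam : Fin n → ℤ, ¬(DomInt μ ∧ DomInt lam) → T μ lam = 0)
    (hR0 : ∀ lam : Fin n → ℤ, ¬ DomInt lam → R lam = 0)
    -- (a) splitting of the Laplace operator
    (a : (Fin n → ℤ) → ℂ) (b : (Fin n → ℤ) → Fin n → ℂ)
    (ha : ∀ lam : Fin n → ℤ, DomInt lam → a lam ≠ 0)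
    (hfact : ∀ lam : Fin n → ℤ, DomInt lam →
      Δ lam = a lam • ((R lam).comp (R lam)) +
        ∑ p : Fin n, b lam p •
          (T lam (lam - Pi.single p 1)).comp (T (lam - Pi.single p 1) lam))
    -- (b) anticommutation of T and R
    (hanti : ∀ μ lam : Fin n → ℤ, mdist μ lam = 1 →
      (T μ lam).comp (R lam) + (R μ).comp (T μ lam) = 0)
    -- (c) the Laplace operators commute with T and R
    (hΔT : ∀ μ lam : Fin n → ℤ, mdist μ lam = 1 →
      (Δ μ).comp (T μ lam) = (T μ lam).comp (Δ lam))
    (hΔR : ∀ lam : Fin n → ℤ, (Δ lam).comp (R lam) = (R lam).comp (Δ lam))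
    -- (d) path operators to and from weights outside the box vanish
    (hvanish : ∀ lam μ : Fin n → ℤ, DomInt lam → DomInt μ →
      (∀ i, lam i ≤ μ i) → lam ≠ μ → ¬ InBox μ lam →
      ∀ P : WPath n lam μ, pathOp T P = 0 ∧ revPathOp T P = 0)
    -- (e) path operators do not depend on the chosen path
    (hindep : ∀ ν μ : Fin n → ℤ, ∀ P₁ P₂ : WPath n ν μ,
      pathOp T P₁ = pathOp T P₂ ∧ revPathOp T P₁ = revPathOp T P₂)
    (μ : Fin n → ℤ) (hμ : DomInt μ) (v : V μ) (hv : R μ v = 0) :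
    (Δ μ ^ ((μ ⟨0, hn⟩).toNat + 1)) v = 0 :=
  polyharmonic_of_RS_general hn T R Δ hT0 a b hfact hanti hΔT hvanish μ hμ v hv
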